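/- Soundness and completeness of the broadcast-print abstraction: given (q, Λ) ∈ Q^b × 2^{Q^b}, we have (q_in, Λ_in) ⇒* (q, Λ) for some Λ_in ∈ {∅, {q_in}} if and only if there exist a b-configuration C_in ∈ I (initial star configuration) and a b-configuration C reachable from it with broadcast-print (q, Λ). -/

import Mathlib

namespace BN

/-- Actions of a broadcast protocol: broadcast `!!m`, reception `?m`, internal `τ`. -/
inductive Act (M : Type) : Type where
  | brd : M → Act M
  | rcv : M → Act M
  | tau : Act M

/-- A broadcast protocol: an initial state and a set of transitions. -/
structure Protocol (Q M : Type) : Type where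
  qin : Q
  delta : Set (Q × Act M × Q)

variable {Q M V : Type}

/-- `q` has an outgoing reception of `m`. -/
def canRecv (P : Protocol Q M) (q : Q) (m : M) : Prop :=
  ∃ q', (q, Act.rcv m, q') ∈ P.delta

/-- One step of the broadcast network semantics over topology `G`,
performed by vertex `v` taking transition `t`. -/
def Step (G : SimpleGraph V) (P : Protocol Q M) (v : V)
    (t : Q × Act M × Q) (L L' : V → Q) : Prop :=
  t ∈ P.delta ∧ L v = t.1 ∧ L' v = t.2.2 ∧
  (match t.2.1 with
   | Act.tau => ∀ u, u ≠ v → L' u = L u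
   | Act.brd m =>
       (∀ u, G.Adj v u →
          ((L u, Act.rcv m, L' u) ∈ P.delta ∨ (¬ canRecv P (L u) m ∧ L' u = L u))) ∧
       (∀ u, u ≠ v → ¬ G.Adj v u → L' u = L u)
   | Act.rcv _ => False)

def StepAny (G : SimpleGraph V) (P : Protocol Q M) (L L' : V → Q) : Prop :=
  ∃ v t, Step G P v t L L'

def Reach (G : SimpleGraph V) (P : Protocol Q M) : (V → Q) → (V → Q) → Prop :=
  Relation.ReflTransGen (StepAny G P)

def initConf (P : Protocol Q M) : V → Q := fun _ => P.qin

/-- `qf` is coverable over the class of all (finite) graph topologies. -/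
def Coverable (P : Protocol Q M) (qf : Q) : Prop :=
  ∃ (V' : Type) (_ : Fintype V') (G : SimpleGraph V') (L : V' → Q),
    Reach G P (initConf P) L ∧ ∃ v, L v = qf

/-- A tree topology: a prefix-closed finite set of words over ℕ containing ε. -/
structure TreeTopo : Type where
  verts : Finset (List ℕ)
  nil_mem : ([] : List ℕ) ∈ verts
  prefixClosed : ∀ w ∈ verts, ∀ w' : List ℕ, w' <+: w → w' ∈ verts

abbrev TreeTopo.Vert (T : TreeTopo) : Type := {w : List ℕ // w ∈ T.verts}

def TreeTopo.root (T : TreeTopo) : T.Vert := ⟨[], T.nil_mem⟩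

/-- The graph of a tree topology: each word `w ++ [x]` is adjacent to its parent `w`. -/
def TreeTopo.graph (T : TreeTopo) : SimpleGraph T.Vert where
  Adj u v := (∃ x : ℕ, (v : List ℕ) = (u : List ℕ) ++ [x]) ∨
             (∃ x : ℕ, (u : List ℕ) = (v : List ℕ) ++ [x])
  symm := by constructor; intro u v h; exact h.symm
  loopless := by
    constructor
    intro u h
    rcases h with ⟨x, hx⟩ | ⟨x, hx⟩ <;> simpa using congrArg List.length hx

def CoverableWith (T : TreeTopo) (P : Protocol Q M) (qf : Q) : Prop :=
  ∃ L : T.Vert → Q, Reach T.graph P (initConf P) L ∧ ∃ u, L u = qf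

def CoverableTreeRoot (P : Protocol Q M) (qf : Q) : Prop :=
  ∃ (T : TreeTopo) (L : T.Vert → Q),
    Reach T.graph P (initConf P) L ∧ L T.root = qf

/-- `(T, lam)` is the unfolding of graph `G` at vertex `v` to depth `n`. -/
structure IsUnfolding {V : Type} (G : SimpleGraph V) (v : V) (n : ℕ)
    (T : TreeTopo) (lam : T.Vert → V) : Prop where
  root_lbl : lam T.root = v
  depth_le : ∀ w ∈ T.verts, w.length ≤ n
  root_children :
    Set.BijOn lam {u : T.Vert | ∃ x : ℕ, (u : List ℕ) = [x]} (G.neighborSet v)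
  children : ∀ (u : T.Vert) (w : List ℕ) (hw : w ∈ T.verts) (x : ℕ),
      (u : List ℕ) = w ++ [x] → (u : List ℕ).length < n →
      Set.BijOn lam {u' : T.Vert | ∃ y : ℕ, (u' : List ℕ) = (u : List ℕ) ++ [y]}
        (G.neighborSet (lam u) \ {lam ⟨w, hw⟩})
  no_deep : ∀ u : T.Vert, n ≤ (u : List ℕ).length →
      ∀ x : ℕ, (u : List ℕ) ++ [x] ∉ T.verts

/-- Phase tags annotating states: `zero` (phase 0), broadcast phase `j`, reception phase `j`. -/
inductive PTag : Type where
  | zero : PTag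
  | bph : ℕ → PTag
  | rph : ℕ → PTag
deriving DecidableEq

def bOf : ℕ → PTag
  | 0 => .zero
  | j+1 => .bph (j+1)

def rOf : ℕ → PTag
  | 0 => .zero
  | j+1 => .rph (j+1)

/-- `φ` witnesses that `P` is `k`-phase-bounded. -/
def IsPhaseAssignment (k : ℕ) (P : Protocol Q M) (φ : Q → PTag) : Prop :=
  φ P.qin = .zero ∧
  (∀ q : Q, φ q = .zero ∨ ∃ j, 1 ≤ j ∧ j ≤ k ∧ (φ q = .bph j ∨ φ q = .rph j)) ∧
  ∀ t ∈ P.delta,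
    (match t.2.1 with
     | Act.tau => φ t.1 = φ t.2.2
     | Act.brd _ =>
         (∃ j, 1 ≤ j ∧ j ≤ k ∧ φ t.1 = .bph j ∧ φ t.2.2 = .bph j) ∨
         (∃ i, i < k ∧ φ t.1 = rOf i ∧ φ t.2.2 = .bph (i+1))
     | Act.rcv _ =>
         (∃ j, 1 ≤ j ∧ j ≤ k ∧ φ t.1 = .rph j ∧ φ t.2.2 = .rph j) ∨
         (∃ i, i < k ∧ φ t.1 = bOf i ∧ φ t.2.2 = .rph (i+1)) ∨
         (1 ≤ k ∧ φ t.1 = .bph k ∧ φ t.2.2 = .rph k))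

def IsPhaseBounded (k : ℕ) (P : Protocol Q M) : Prop :=
  ∃ φ : Q → PTag, IsPhaseAssignment k P φ

/-- The `k`-unfolding `Pₖ` of a protocol `P`. -/
def unfoldP (P : Protocol Q M) (k : ℕ) : Protocol (Q × PTag) M where
  qin := (P.qin, .zero)
  delta :=
    {t | ∃ q p, (q, Act.tau, p) ∈ P.delta ∧ t = ((q, .zero), Act.tau, (p, .zero))} ∪
    {t | ∃ q p α j, 1 ≤ j ∧ j ≤ k ∧ (q, α, p) ∈ P.delta ∧
        (α = Act.tau ∨ ∃ m, α = Act.rcv m) ∧ t = ((q, .rph j), α, (p, .rph j))} ∪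
    {t | ∃ q p α j, 1 ≤ j ∧ j ≤ k ∧ (q, α, p) ∈ P.delta ∧
        (α = Act.tau ∨ ∃ m, α = Act.brd m) ∧ t = ((q, .bph j), α, (p, .bph j))} ∪
    {t | ∃ q p m j, j < k ∧ (q, Act.brd m, p) ∈ P.delta ∧
        t = ((q, rOf j), Act.brd m, (p, .bph (j+1)))} ∪
    {t | ∃ q p m j, j < k ∧ (q, Act.rcv m, p) ∈ P.delta ∧
        t = ((q, bOf j), Act.rcv m, (p, .rph (j+1)))} ∪
    {t | ∃ q p m, 1 ≤ k ∧ (q, Act.rcv m, p) ∈ P.delta ∧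
        t = ((q, .bph k), Act.rcv m, (p, .rph k))}

/-- Star topology: root `none` adjacent to every leaf `some i`, no other edges. -/
def starGraph (ι : Type) : SimpleGraph (Option ι) where
  Adj u v := (u = none ∧ v ≠ none) ∨ (v = none ∧ u ≠ none)
  symm := by constructor; intro u v h; tauto
  loopless := by constructor; intro u h; tauto

/-- For a 1-phase-bounded protocol with witness `φ`, `Q^b = Q₀ ∪ Q₁^b`. -/
def Qb (φ : Q → PTag) : Set Q := {q | φ q = .zero ∨ φ q = .bph 1}

/-- The set component of the broadcast-print of a star configuration. -/
def bprintSet {ι : Type} (φ : Q → PTag) (L : Option ι → Q) : Set Q :=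
  {q | q ∈ Qb φ ∧ ∃ i, L (some i) = q}

/-- The abstract transition relation `⇒` on broadcast-prints. -/
def PrintStep (P : Protocol Q M) (φ : Q → PTag) :
    (Q × Set Q) → (Q × Set Q) → Prop := fun pr pr' =>
  ∃ (ι : Type) (_ : Fintype ι) (L L' : Option ι → Q),
    StepAny (starGraph ι) P L L' ∧ L none ∈ Qb φ ∧ L' none ∈ Qb φ ∧
    pr = (L none, bprintSet φ L) ∧ pr' = (L' none, bprintSet φ L')

/-- Line topology on `Fin ℓ`: consecutive vertices are adjacent. -/
def lineGraph (ℓ : ℕ) : SimpleGraph (Fin ℓ) where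
  Adj i j := (i : ℕ) + 1 = (j : ℕ) ∨ (j : ℕ) + 1 = (i : ℕ)
  symm := by constructor; intro i j h; tauto
  loopless := by constructor; intro i h; rcases h with h | h <;> omega

/-- `t` is a broadcast transition. -/
def IsBrdT (t : Q × Act M × Q) : Prop := ∃ m, t.2.1 = Act.brd m

/-- In the execution described by `vs, ts` of length `n`, `i` is the first index at
which vertex `u` performs a broadcast. -/
def IsFirstBrd {V' : Type} (vs : ℕ → V') (ts : ℕ → Q × Act M × Q) (n : ℕ)
    (u : V') (i : ℕ) : Prop :=
  i < n ∧ vs i = u ∧ IsBrdT (ts i) ∧ ∀ j < i, vs j = u → ¬ IsBrdT (ts j)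

/-- Every transition of `u` occurs no later than every broadcast of `w`
(i.e. lastBroadcast(u) ≤ firstBroadcast(w)). -/
def BrdOrder {V' : Type} (n : ℕ) (vs : ℕ → V') (ts : ℕ → Q × Act M × Q)
    (u w : V') : Prop :=
  ∀ j j', j < n → j' < n → vs j = u → vs j' = w → IsBrdT (ts j') → j ≤ j'

/-- One application of the pair-coverability operator. -/
def pairStep (P : Protocol Q M) (S : Set (Q × Q)) : Set (Q × Q) :=
  S ∪
  {p | ∃ p₁, (p₁, p.2) ∈ S ∧ (p₁, Act.tau, p.1) ∈ P.delta} ∪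
  {p | ∃ p₂, (p.1, p₂) ∈ S ∧ (p₂, Act.tau, p.2) ∈ P.delta} ∪
  {p | ∃ p₁ p₂ m, (p₁, p₂) ∈ S ∧ (p₂, Act.brd m, p.2) ∈ P.delta ∧
      (p₁, Act.rcv m, p.1) ∈ P.delta} ∪
  {p | ∃ p₂ m, (p.1, p₂) ∈ S ∧ (p₂, Act.brd m, p.2) ∈ P.delta ∧ ¬ canRecv P p.1 m} ∪
  {p | p.1 = P.qin ∧ ∃ q', (p.2, q') ∈ S}

/-- The iteration `S₀ ⊆ S₁ ⊆ …` of the pair-coverability operator. -/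
def Siter (P : Protocol Q M) : ℕ → Set (Q × Q)
  | 0 => {(P.qin, P.qin)}
  | i+1 => pairStep P (Siter P i)


/-!
Completeness: along a star run ending with the root in `Q^b`, the root is in `Q^b` throughout,
because `Q^b` is entered only from `Q^b` (τ-steps keep the phase, broadcasts start in `Q^b`,
receptions end outside it); hence every step of the run is a step of `⇒`.

Soundness: a step of `⇒` is witnessed by an arbitrary configuration, and the print forgets how
many leaves hold each state. So the step is replayed on reachable configurations in which every
state of the print is held by arbitrarily many leaves: a root move is performed as it is, and a
leaf move `p → p'` by a batch of leaves in state `p`, half of them if `p` stays in the print and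
all of them otherwise. Since the root stays in `Q^b`, it receives none of their broadcasts, so
the leaves of the batch can move one after the other.
-/

open Relation

section PrintAbstraction

variable {P : Protocol Q M} {φ : Q → PTag} {ι : Type}

lemma tag_eq_rph_of_rcv (hφ : IsPhaseAssignment 1 P φ) {p p' : Q} {m : M}
    (h : (p, Act.rcv m, p') ∈ P.delta) : φ p' = .rph 1 := by
  rcases hφ.2.2 _ h with ⟨j, hj1, hjk, -, h'⟩ | ⟨i, hi, -, h'⟩ | ⟨-, -, h'⟩
  · obtain rfl : j = 1 := by omega
    exact h'
  · obtain rfl : i = 0 := by omega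
    exact h'
  · exact h'

lemma notMem_Qb_of_rcv (hφ : IsPhaseAssignment 1 P φ) {p p' : Q} {m : M}
    (h : (p, Act.rcv m, p') ∈ P.delta) : p' ∉ Qb φ := by
  simp [Qb, tag_eq_rph_of_rcv hφ h]

lemma mem_Qb_of_brd (hφ : IsPhaseAssignment 1 P φ) {p p' : Q} {m : M}
    (h : (p, Act.brd m, p') ∈ P.delta) : p ∈ Qb φ ∧ p' ∈ Qb φ := by
  rcases hφ.2.2 _ h with ⟨j, hj1, hjk, h, h'⟩ | ⟨i, hi, h, h'⟩
  · obtain rfl : j = 1 := by omega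
    exact ⟨Or.inr h, Or.inr h'⟩
  · obtain rfl : i = 0 := by omega
    exact ⟨Or.inl h, Or.inr h'⟩

lemma mem_Qb_iff_of_tau (hφ : IsPhaseAssignment 1 P φ) {p p' : Q}
    (h : (p, Act.tau, p') ∈ P.delta) : p ∈ Qb φ ↔ p' ∈ Qb φ := by
  simp only [Qb, Set.mem_ofPred_eq, show φ p = φ p' from hφ.2.2 _ h]

def UnheardBy (P : Protocol Q M) (q : Q) (α : Act M) : Prop :=
  α = Act.tau ∨ ∃ m, α = Act.brd m ∧ ¬ canRecv P q m

lemma UnheardBy.mem_Qb_iff (hφ : IsPhaseAssignment 1 P φ) {q p p' : Q} {α : Act M}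
    (hα : UnheardBy P q α) (h : (p, α, p') ∈ P.delta) : p ∈ Qb φ ↔ p' ∈ Qb φ := by
  rcases hα with rfl | ⟨m, rfl, -⟩
  · exact mem_Qb_iff_of_tau hφ h
  · exact iff_of_true (mem_Qb_of_brd hφ h).1 (mem_Qb_of_brd hφ h).2

lemma starGraph_adj_none {u : Option ι} : (starGraph ι).Adj none u ↔ u ≠ none := by
  simp [starGraph]

lemma starGraph_adj_some {i : ι} {u : Option ι} : (starGraph ι).Adj (some i) u ↔ u = none := by
  simp [starGraph]

lemma stepAny_root_tau [DecidableEq ι] {L : Option ι → Q} {q' : Q}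
    (h : (L none, Act.tau, q') ∈ P.delta) :
    StepAny (starGraph ι) P L (Function.update L none q') :=
  ⟨none, _, h, rfl, by simp, fun _ hu => Function.update_of_ne hu _ _⟩

lemma stepAny_root_brd {L : Option ι → Q} {q' : Q} {m : M}
    (h : (L none, Act.brd m, q') ∈ P.delta) {ρ : ι → Q}
    (hρ : ∀ i, (L (some i), Act.rcv m, ρ i) ∈ P.delta ∨
      (¬ canRecv P (L (some i)) m ∧ ρ i = L (some i))) :
    StepAny (starGraph ι) P L (fun u => u.elim q' ρ) := by
  refine ⟨none, _, h, rfl, rfl, fun u hadj => ?_, fun u hu hadj => ?_⟩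
  · cases u with
    | none => exact (hadj.ne rfl).elim
    | some i => exact hρ i
  · exact absurd (starGraph_adj_none.2 hu) hadj

lemma stepAny_leaf [DecidableEq ι] {L : Option ι → Q} {i : ι} {α : Act M} {p' : Q}
    (h : (L (some i), α, p') ∈ P.delta) (hα : UnheardBy P (L none) α) :
    StepAny (starGraph ι) P L (Function.update L (some i) p') := by
  refine ⟨some i, _, h, rfl, by simp, ?_⟩
  rcases hα with rfl | ⟨m, rfl, hm⟩
  · exact fun u hu => Function.update_of_ne hu _ _
  · refine ⟨fun u hadj => ?_, fun u hu _ => Function.update_of_ne hu _ _⟩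
    obtain rfl := starGraph_adj_some.1 hadj
    exact Or.inr ⟨hm, Function.update_of_ne (by simp) _ _⟩

lemma Step.unheardBy_eq_update_of_leaf (hφ : IsPhaseAssignment 1 P φ) [DecidableEq ι]
    {L L' : Option ι → Q} {i : ι} {p p' : Q} {α : Act M}
    (h : Step (starGraph ι) P (some i) (p, α, p') L L') (hroot : L' none ∈ Qb φ) :
    UnheardBy P (L none) α ∧ L' = Function.update L (some i) p' := by
  obtain ⟨-, -, hi, hrest⟩ := h
  rw [Function.eq_update_iff]
  cases α with
  | tau => exact ⟨Or.inl rfl, hi, hrest⟩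
  | rcv m => exact hrest.elim
  | brd m =>
    obtain ⟨hadj, hnadj⟩ := hrest
    rcases hadj none (starGraph_adj_some.2 rfl) with hrcv | ⟨hno, hstay⟩
    · exact absurd hroot (notMem_Qb_of_rcv hφ hrcv)
    · refine ⟨Or.inr ⟨m, rfl, hno⟩, hi, fun u hu => ?_⟩
      cases u with
      | none => exact hstay
      | some j => exact hnadj _ hu (by simp [starGraph_adj_some])

lemma bprintSet_congr {L L' : Option ι → Q} (h : ∀ i, L' (some i) = L (some i)) :
    bprintSet φ L' = bprintSet φ L := by
  simp only [bprintSet, h]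

lemma bprintSet_of_brd (hφ : IsPhaseAssignment 1 P φ) {L L' : Option ι → Q} {m : M}
    (h : ∀ i, (L (some i), Act.rcv m, L' (some i)) ∈ P.delta ∨
      (¬ canRecv P (L (some i)) m ∧ L' (some i) = L (some i))) :
    bprintSet φ L' = {p | p ∈ bprintSet φ L ∧ ¬ canRecv P p m} := by
  ext r
  constructor
  · rintro ⟨hr, i, rfl⟩
    rcases h i with hrcv | ⟨hno, hstay⟩
    · exact absurd hr (notMem_Qb_of_rcv hφ hrcv)
    · rw [hstay] at hr ⊢
      exact ⟨⟨hr, i, rfl⟩, hno⟩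
  · rintro ⟨⟨hr, i, rfl⟩, hno⟩
    rcases h i with hrcv | ⟨-, hstay⟩
    · exact absurd ⟨_, hrcv⟩ hno
    · exact ⟨hr, i, hstay⟩

lemma mem_bprintSet_update [DecidableEq ι] {L : Option ι → Q} {i : ι} {p' r : Q} :
    r ∈ bprintSet φ (Function.update L (some i) p') ↔
      r ∈ Qb φ ∧ (r = p' ∨ ∃ j ≠ i, L (some j) = r) := by
  simp only [bprintSet, Set.mem_ofPred_eq, Function.update_apply, Option.some.injEq]
  constructor
  · rintro ⟨hr, j, hj⟩
    refine ⟨hr, ?_⟩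
    split_ifs at hj with hji
    · exact Or.inl hj.symm
    · exact Or.inr ⟨j, hji, hj⟩
  · rintro ⟨hr, rfl | ⟨j, hji, hj⟩⟩
    · exact ⟨hr, i, if_pos rfl⟩
    · exact ⟨hr, j, by rwa [if_neg hji]⟩

lemma bprintSet_update_of_mem [DecidableEq ι] {L : Option ι → Q} {i : ι} {p' : Q}
    (hp' : p' ∈ Qb φ) (hkeep : L (some i) ∈ bprintSet φ (Function.update L (some i) p')) :
    bprintSet φ (Function.update L (some i) p') = insert p' (bprintSet φ L) := by
  ext r
  rw [mem_bprintSet_update]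
  constructor
  · rintro ⟨hr, rfl | ⟨j, -, rfl⟩⟩
    exacts [Or.inl rfl, Or.inr ⟨hr, j, rfl⟩]
  · rintro (rfl | ⟨hr, j, rfl⟩)
    · exact ⟨hp', Or.inl rfl⟩
    · obtain rfl | hji := eq_or_ne j i
      exacts [mem_bprintSet_update.1 hkeep, ⟨hr, Or.inr ⟨j, hji, rfl⟩⟩]

lemma bprintSet_update_of_notMem [DecidableEq ι] {L : Option ι → Q} {i : ι} {p' : Q}
    (hp : L (some i) ∈ Qb φ) (hp' : p' ∈ Qb φ)
    (hkeep : L (some i) ∉ bprintSet φ (Function.update L (some i) p')) :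
    bprintSet φ (Function.update L (some i) p') = insert p' (bprintSet φ L \ {L (some i)}) := by
  rw [mem_bprintSet_update] at hkeep
  ext r
  rw [mem_bprintSet_update]
  constructor
  · rintro ⟨hr, rfl | ⟨j, hji, rfl⟩⟩
    · exact Or.inl rfl
    · exact Or.inr ⟨⟨hr, j, rfl⟩, fun h => hkeep ⟨hp, Or.inr ⟨j, hji, h⟩⟩⟩
  · rintro (rfl | ⟨⟨hr, j, rfl⟩, hji⟩)
    · exact ⟨hp', Or.inl rfl⟩
    · exact ⟨hr, Or.inr ⟨j, fun h => hji (congrArg (L ∘ some) h), rfl⟩⟩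

lemma bprintSet_update_of_notMem_Qb [DecidableEq ι] {L : Option ι → Q} {i : ι} {p' : Q}
    (hp : L (some i) ∉ Qb φ) (hp' : p' ∉ Qb φ) :
    bprintSet φ (Function.update L (some i) p') = bprintSet φ L := by
  ext r
  rw [mem_bprintSet_update]
  constructor
  · rintro ⟨hr, rfl | ⟨j, -, rfl⟩⟩
    exacts [absurd hr hp', ⟨hr, j, rfl⟩]
  · rintro ⟨hr, j, rfl⟩
    obtain rfl | hji := eq_or_ne j i
    exacts [absurd hr hp, ⟨hr, Or.inr ⟨j, hji, rfl⟩⟩]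

/-- The local rules behind `⇒`. A leaf move `p → p'` is performed either by some of the leaves
in state `p` (`leafSpawn`) or by all of them (`leafShift`). -/
inductive PrintMove (P : Protocol Q M) (φ : Q → PTag) : Q × Set Q → Q × Set Q → Prop
  | rootTau {q q' : Q} {Λ : Set Q} :
      (q, Act.tau, q') ∈ P.delta → PrintMove P φ (q, Λ) (q', Λ)
  | rootBrd {q q' : Q} {Λ : Set Q} {m : M} : (q, Act.brd m, q') ∈ P.delta →
      PrintMove P φ (q, Λ) (q', {p | p ∈ Λ ∧ ¬ canRecv P p m})
  | leafSpawn {q p p' : Q} {Λ : Set Q} {α : Act M} :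
      (p, α, p') ∈ P.delta → UnheardBy P q α → p ∈ Λ → p' ∈ Qb φ →
      PrintMove P φ (q, Λ) (q, insert p' Λ)
  | leafShift {q p p' : Q} {Λ : Set Q} {α : Act M} :
      (p, α, p') ∈ P.delta → UnheardBy P q α → p ∈ Λ → p' ∈ Qb φ →
      PrintMove P φ (q, Λ) (q, insert p' (Λ \ {p}))

lemma reflGen_printMove_update (hφ : IsPhaseAssignment 1 P φ) [DecidableEq ι]
    {L : Option ι → Q} {i : ι} {α : Act M} {p' : Q}
    (ht : (L (some i), α, p') ∈ P.delta) (hα : UnheardBy P (L none) α) :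
    ReflGen (PrintMove P φ) (L none, bprintSet φ L)
      (L none, bprintSet φ (Function.update L (some i) p')) := by
  by_cases hp : L (some i) ∈ Qb φ
  · have hp' : p' ∈ Qb φ := (hα.mem_Qb_iff hφ ht).1 hp
    have hpΛ : L (some i) ∈ bprintSet φ L := ⟨hp, i, rfl⟩
    by_cases hkeep : L (some i) ∈ bprintSet φ (Function.update L (some i) p')
    · rw [bprintSet_update_of_mem hp' hkeep]
      exact .single (.leafSpawn ht hα hpΛ hp')
    · rw [bprintSet_update_of_notMem hp hp' hkeep]
      exact .single (.leafShift ht hα hpΛ hp')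
  · have hp' : p' ∉ Qb φ := fun h => hp ((hα.mem_Qb_iff hφ ht).2 h)
    rw [bprintSet_update_of_notMem_Qb hp hp']

lemma PrintStep.reflGen_printMove (hφ : IsPhaseAssignment 1 P φ) {pr pr' : Q × Set Q}
    (h : PrintStep P φ pr pr') : ReflGen (PrintMove P φ) pr pr' := by
  classical
  obtain ⟨ι, -, L, L', ⟨v, ⟨p, α, p'⟩, hstep⟩, -, hroot', rfl, rfl⟩ := h
  cases v with
  | some i =>
    obtain ⟨hα, rfl⟩ := hstep.unheardBy_eq_update_of_leaf hφ hroot'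
    obtain ⟨ht, rfl : L (some i) = p, -⟩ := hstep
    exact reflGen_printMove_update hφ ht hα
  | none =>
    obtain ⟨ht, rfl : L none = p, rfl : L' none = p', hrest⟩ := hstep
    cases α with
    | tau =>
      rw [bprintSet_congr fun i => hrest (some i) (by simp)]
      exact .single (.rootTau ht)
    | rcv m => exact hrest.elim
    | brd m =>
      rw [bprintSet_of_brd hφ fun i => hrest.1 (some i) (starGraph_adj_none.2 (by simp))]
      exact .single (.rootBrd ht)

def moveLeaves [DecidableEq ι] (s : Finset ι) (p' : Q) (L : Option ι → Q) : Option ι → Q :=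
  fun u => u.elim (L none) fun i => if i ∈ s then p' else L (some i)

@[simp] lemma moveLeaves_none [DecidableEq ι] (s : Finset ι) (p' : Q) (L : Option ι → Q) :
    moveLeaves s p' L none = L none := rfl

lemma moveLeaves_some [DecidableEq ι] (s : Finset ι) (p' : Q) (L : Option ι → Q) (i : ι) :
    moveLeaves s p' L (some i) = if i ∈ s then p' else L (some i) := rfl

lemma moveLeaves_some_of_mem [DecidableEq ι] {s : Finset ι} {i : ι} (p' : Q)
    (L : Option ι → Q) (hi : i ∈ s) : moveLeaves s p' L (some i) = p' := if_pos hi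

lemma moveLeaves_some_of_notMem [DecidableEq ι] {s : Finset ι} {i : ι} (p' : Q)
    (L : Option ι → Q) (hi : i ∉ s) : moveLeaves s p' L (some i) = L (some i) := if_neg hi

lemma moveLeaves_insert [DecidableEq ι] {s : Finset ι} {a : ι} (p' : Q) (L : Option ι → Q) :
    moveLeaves (insert a s) p' L = Function.update (moveLeaves s p' L) (some a) p' := by
  funext u
  cases u with
  | none => rfl
  | some i =>
    by_cases hi : i = a
    · simp [moveLeaves_some, hi]
    · simp [moveLeaves_some, hi, Finset.mem_insert]

lemma reach_moveLeaves [DecidableEq ι] {L : Option ι → Q} {s : Finset ι} {p p' : Q}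
    {α : Act M} (ht : (p, α, p') ∈ P.delta) (hα : UnheardBy P (L none) α)
    (hs : ∀ i ∈ s, L (some i) = p) : Reach (starGraph ι) P L (moveLeaves s p' L) := by
  induction s using Finset.induction_on with
  | empty =>
    rw [show moveLeaves ∅ p' L = L by funext u; cases u <;> simp [moveLeaves_some]]
    exact .refl
  | insert a s ha ih =>
    rw [moveLeaves_insert]
    refine (ih fun i hi => hs i (Finset.mem_insert_of_mem hi)).tail (stepAny_leaf ?_ hα)
    rwa [moveLeaves_some, if_neg ha, hs a (Finset.mem_insert_self a s)]

lemma mem_bprintSet_moveLeaves [DecidableEq ι] {L : Option ι → Q} {s : Finset ι} {p' r : Q} :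
    r ∈ bprintSet φ (moveLeaves s p' L) ↔
      r ∈ Qb φ ∧ ((r = p' ∧ s.Nonempty) ∨ ∃ i ∉ s, L (some i) = r) := by
  simp only [bprintSet, Set.mem_ofPred_eq, moveLeaves_some]
  constructor
  · rintro ⟨hr, i, hi⟩
    refine ⟨hr, ?_⟩
    split_ifs at hi with his
    exacts [Or.inl ⟨hi.symm, i, his⟩, Or.inr ⟨i, his, hi⟩]
  · rintro ⟨hr, ⟨rfl, i, his⟩ | ⟨i, his, hi⟩⟩
    exacts [⟨hr, i, if_pos his⟩, ⟨hr, i, by rwa [if_neg his]⟩]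

def Realizable (P : Protocol Q M) (φ : Q → PTag) (pr : Q × Set Q) : Prop :=
  ∀ n : ℕ, ∃ (ι : Type) (_ : Fintype ι) (L : Option ι → Q),
    Reach (starGraph ι) P (initConf P) L ∧ L none = pr.1 ∧ bprintSet φ L = pr.2 ∧
    ∀ p ∈ pr.2, ∃ s : Finset ι, n < s.card ∧ ∀ i ∈ s, L (some i) = p

lemma bprintSet_initConf_of_isEmpty [IsEmpty ι] :
    bprintSet φ (initConf P : Option ι → Q) = ∅ := by
  ext r
  simp [bprintSet]

lemma bprintSet_initConf_of_nonempty (hφ : IsPhaseAssignment 1 P φ) [Nonempty ι] :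
    bprintSet φ (initConf P : Option ι → Q) = {P.qin} := by
  ext r
  simp only [bprintSet, initConf, Set.mem_ofPred_eq, Set.mem_singleton_iff]
  exact ⟨fun ⟨_, _, h⟩ => h.symm,
    fun h => ⟨h ▸ Or.inl hφ.1, Classical.arbitrary ι, h.symm⟩⟩

lemma realizable_init (hφ : IsPhaseAssignment 1 P φ) {Λ : Set Q}
    (hΛ : Λ = ∅ ∨ Λ = {P.qin}) : Realizable P φ (P.qin, Λ) := by
  intro n
  rcases hΛ with rfl | rfl
  · exact ⟨Empty, inferInstance, initConf P, .refl, rfl, bprintSet_initConf_of_isEmpty,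
      by simp⟩
  · refine ⟨Fin (n + 1), inferInstance, initConf P, .refl, rfl,
      bprintSet_initConf_of_nonempty hφ, ?_⟩
    rintro p rfl
    exact ⟨Finset.univ, by simp, fun _ _ => rfl⟩

lemma Realizable.rootTau {q q' : Q} {Λ : Set Q} (ht : (q, Act.tau, q') ∈ P.delta)
    (h : Realizable P φ (q, Λ)) : Realizable P φ (q', Λ) := by
  classical
  intro n
  obtain ⟨ι, _, L, hL, rfl, rfl, hcopies⟩ := h n
  refine ⟨ι, inferInstance, Function.update L none q', hL.tail (stepAny_root_tau ht), by simp,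
    bprintSet_congr fun i => by simp, fun p hp => ?_⟩
  obtain ⟨s, hs, hsp⟩ := hcopies p hp
  exact ⟨s, hs, fun i hi => by simpa using hsp i hi⟩

lemma Realizable.rootBrd (hφ : IsPhaseAssignment 1 P φ) {q q' : Q} {Λ : Set Q} {m : M}
    (ht : (q, Act.brd m, q') ∈ P.delta) (h : Realizable P φ (q, Λ)) :
    Realizable P φ (q', {p | p ∈ Λ ∧ ¬ canRecv P p m}) := by
  intro n
  obtain ⟨ι, _, L, hL, rfl, rfl, hcopies⟩ := h n
  have hresp : ∀ i, ∃ r, (L (some i), Act.rcv m, r) ∈ P.delta ∨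
      (¬ canRecv P (L (some i)) m ∧ r = L (some i)) := by
    intro i
    by_cases hrcv : canRecv P (L (some i)) m
    · exact hrcv.imp fun _ => Or.inl
    · exact ⟨_, Or.inr ⟨hrcv, rfl⟩⟩
  choose ρ hρ using hresp
  refine ⟨ι, inferInstance, fun u => u.elim q' ρ, hL.tail (stepAny_root_brd ht hρ), rfl,
    bprintSet_of_brd hφ hρ, fun p ⟨hp, hno⟩ => ?_⟩
  obtain ⟨s, hs, hsp⟩ := hcopies p hp
  refine ⟨s, hs, fun i hi => ?_⟩
  rcases hρ i with hrcv | ⟨-, hstay⟩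
  · exact absurd ⟨_, hrcv⟩ (hsp i hi ▸ hno)
  · exact hstay.trans (hsp i hi)

lemma Realizable.leafSpawn {q p p' : Q} {Λ : Set Q} {α : Act M} (ht : (p, α, p') ∈ P.delta)
    (hα : UnheardBy P q α) (hp : p ∈ Λ) (hp' : p' ∈ Qb φ) (h : Realizable P φ (q, Λ)) :
    Realizable P φ (q, insert p' Λ) := by
  classical
  intro n
  obtain ⟨ι, _, L, hL, rfl, rfl, hcopies⟩ := h (2 * n + 1)
  obtain ⟨s, hs, hsp⟩ := hcopies p hp
  obtain ⟨t, hts, ht_card⟩ := Finset.exists_subset_card_eq (show n + 1 ≤ s.card by omega)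
  have hrest : n < (s \ t).card := by
    have := Finset.le_card_sdiff t s
    omega
  have htp : ∀ i ∈ t, L (some i) = p := fun i hi => hsp i (hts hi)
  refine ⟨ι, inferInstance, moveLeaves t p' L, hL.trans (reach_moveLeaves ht hα htp), rfl,
    ?_, ?_⟩
  · ext r
    rw [mem_bprintSet_moveLeaves]
    constructor
    · rintro ⟨hr, ⟨rfl, -⟩ | ⟨i, -, rfl⟩⟩
      exacts [Set.mem_insert _ _, Set.mem_insert_of_mem _ ⟨hr, i, rfl⟩]
    · rintro (rfl | ⟨hr, i, rfl⟩)
      · exact ⟨hp', Or.inl ⟨rfl, Finset.card_pos.1 (by omega)⟩⟩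
      · refine ⟨hr, Or.inr ?_⟩
        by_cases hit : i ∈ t
        · obtain ⟨j, hj⟩ := Finset.card_pos.1 (show 0 < (s \ t).card by omega)
          rw [Finset.mem_sdiff] at hj
          exact ⟨j, hj.2, (hsp j hj.1).trans (htp i hit).symm⟩
        · exact ⟨i, hit, rfl⟩
  · rintro r (rfl | hr)
    · exact ⟨t, by omega, fun i hi => moveLeaves_some_of_mem _ L hi⟩
    obtain rfl | hrp := eq_or_ne r p
    · refine ⟨s \ t, hrest, fun i hi => ?_⟩
      rw [Finset.mem_sdiff] at hi
      exact (moveLeaves_some_of_notMem _ L hi.2).trans (hsp i hi.1)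
    obtain ⟨u, hu, hur⟩ := hcopies r hr
    refine ⟨u, by omega, fun i hi => ?_⟩
    have hit : i ∉ t := fun hit => hrp ((hur i hi).symm.trans (htp i hit))
    exact (moveLeaves_some_of_notMem _ L hit).trans (hur i hi)

lemma Realizable.leafShift {q p p' : Q} {Λ : Set Q} {α : Act M} (ht : (p, α, p') ∈ P.delta)
    (hα : UnheardBy P q α) (hp : p ∈ Λ) (hp' : p' ∈ Qb φ) (h : Realizable P φ (q, Λ)) :
    Realizable P φ (q, insert p' (Λ \ {p})) := by
  classical
  intro n
  obtain ⟨ι, _, L, hL, rfl, rfl, hcopies⟩ := h n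
  obtain ⟨s, hs, hsp⟩ := hcopies p hp
  set t := Finset.univ.filter fun i => L (some i) = p
  have hmem_t : ∀ i, i ∈ t ↔ L (some i) = p := by simp [t]
  refine ⟨ι, inferInstance, moveLeaves t p' L,
    hL.trans (reach_moveLeaves ht hα fun i => (hmem_t i).1), rfl, ?_, ?_⟩
  · ext r
    rw [mem_bprintSet_moveLeaves]
    constructor
    · rintro ⟨hr, ⟨rfl, -⟩ | ⟨i, hit, rfl⟩⟩
      · exact Set.mem_insert _ _
      · exact Set.mem_insert_of_mem _ ⟨⟨hr, i, rfl⟩, fun h => hit ((hmem_t i).2 h)⟩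
    · rintro (rfl | ⟨⟨hr, i, rfl⟩, hip⟩)
      · obtain ⟨i, hi⟩ := Finset.card_pos.1 (show 0 < s.card by omega)
        exact ⟨hp', Or.inl ⟨rfl, i, (hmem_t i).2 (hsp i hi)⟩⟩
      · exact ⟨hr, Or.inr ⟨i, fun hit => hip ((hmem_t i).1 hit), rfl⟩⟩
  · rintro r (rfl | ⟨hr, hrp⟩)
    · exact ⟨s, hs, fun i hi => moveLeaves_some_of_mem _ L ((hmem_t i).2 (hsp i hi))⟩
    obtain ⟨u, hu, hur⟩ := hcopies r hr
    refine ⟨u, hu, fun i hi => ?_⟩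
    have hit : i ∉ t := fun hit => hrp ((hur i hi).symm.trans ((hmem_t i).1 hit))
    exact (moveLeaves_some_of_notMem _ L hit).trans (hur i hi)

lemma Realizable.of_printMove (hφ : IsPhaseAssignment 1 P φ) {pr pr' : Q × Set Q}
    (hmove : PrintMove P φ pr pr') (h : Realizable P φ pr) : Realizable P φ pr' := by
  cases hmove with
  | rootTau ht => exact h.rootTau ht
  | rootBrd ht => exact h.rootBrd hφ ht
  | leafSpawn ht hα hp hp' => exact h.leafSpawn ht hα hp hp'
  | leafShift ht hα hp hp' => exact h.leafShift ht hα hp hp'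

lemma Realizable.of_reflTransGen (hφ : IsPhaseAssignment 1 P φ) {pr pr' : Q × Set Q}
    (hrun : ReflTransGen (PrintStep P φ) pr pr') (h : Realizable P φ pr) :
    Realizable P φ pr' := by
  induction hrun with
  | refl => exact h
  | tail _ hstep ih =>
    rcases hstep.reflGen_printMove hφ with _ | hmove
    exacts [ih, ih.of_printMove hφ hmove]

lemma fst_mem_Qb_of_reflTransGen (hφ : IsPhaseAssignment 1 P φ) {Λin : Set Q} {pr : Q × Set Q}
    (hrun : ReflTransGen (PrintStep P φ) (P.qin, Λin) pr) : pr.1 ∈ Qb φ := by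
  rcases hrun.cases_tail with rfl | ⟨_, -, ⟨_, _, _, _, -, -, hroot', -, rfl⟩⟩
  exacts [Or.inl hφ.1, hroot']

lemma StepAny.root_mem_Qb (hφ : IsPhaseAssignment 1 P φ) {L L' : Option ι → Q}
    (h : StepAny (starGraph ι) P L L') (hroot' : L' none ∈ Qb φ) : L none ∈ Qb φ := by
  classical
  obtain ⟨v, ⟨p, α, p'⟩, hstep⟩ := h
  cases v with
  | some i =>
    obtain ⟨-, rfl⟩ := hstep.unheardBy_eq_update_of_leaf hφ hroot'
    simpa using hroot'
  | none =>
    obtain ⟨ht, rfl : L none = p, rfl : L' none = p', hrest⟩ := hstep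
    cases α with
    | tau => exact (mem_Qb_iff_of_tau hφ ht).2 hroot'
    | rcv m => exact hrest.elim
    | brd m => exact (mem_Qb_of_brd hφ ht).1

lemma Reach.reflTransGen_printStep (hφ : IsPhaseAssignment 1 P φ) [Fintype ι]
    {L₀ L : Option ι → Q} (hreach : Reach (starGraph ι) P L₀ L) (hroot : L none ∈ Qb φ) :
    ReflTransGen (PrintStep P φ) (L₀ none, bprintSet φ L₀) (L none, bprintSet φ L) := by
  induction hreach with
  | refl => exact .refl
  | tail _ hstep ih =>
    have hroot_mid := hstep.root_mem_Qb hφ hroot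
    exact (ih hroot_mid).tail ⟨ι, inferInstance, _, _, hstep, hroot_mid, hroot, rfl, rfl⟩

end PrintAbstraction

theorem print_abstraction_sound_complete_general {Q M : Type}
    (P : Protocol Q M) (φ : Q → PTag) (hφ : IsPhaseAssignment 1 P φ)
    (q : Q) (Λ : Set Q) :
    (∃ Λin : Set Q, (Λin = ∅ ∨ Λin = {P.qin}) ∧
        Relation.ReflTransGen (PrintStep P φ) (P.qin, Λin) (q, Λ)) ↔
    (∃ (ι : Type) (_ : Fintype ι) (L : Option ι → Q),
        Reach (starGraph ι) P (initConf P) L ∧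
        L none ∈ Qb φ ∧ L none = q ∧ bprintSet φ L = Λ) := by
  constructor
  · rintro ⟨Λin, hΛin, hrun⟩
    obtain ⟨ι, _, L, hL, rfl, rfl, -⟩ := (realizable_init hφ hΛin).of_reflTransGen hφ hrun 0
    exact ⟨ι, inferInstance, L, hL, fst_mem_Qb_of_reflTransGen hφ hrun, rfl, rfl⟩
  · rintro ⟨ι, _, L, hL, hroot, rfl, rfl⟩
    refine ⟨_, ?_, hL.reflTransGen_printStep hφ hroot⟩
    rcases isEmpty_or_nonempty ι with hι | hι
    exacts [Or.inl bprintSet_initConf_of_isEmpty, Or.inr (bprintSet_initConf_of_nonempty hφ)]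

/-- soundness and completeness of the broadcast-print abstraction. -/
theorem print_abstraction_sound_complete {Q M : Type} [Fintype Q]
    (P : Protocol Q M) (φ : Q → PTag) (hφ : IsPhaseAssignment 1 P φ)
    (q : Q) (Λ : Set Q) :
    (∃ Λin : Set Q, (Λin = ∅ ∨ Λin = {P.qin}) ∧
        Relation.ReflTransGen (PrintStep P φ) (P.qin, Λin) (q, Λ)) ↔
    (∃ (ι : Type) (_ : Fintype ι) (L : Option ι → Q),
        Reach (starGraph ι) P (initConf P) L ∧
        L none ∈ Qb φ ∧ L none = q ∧ bprintSet φ L = Λ) :=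
  print_abstraction_sound_complete_general P φ hφ q Λ

end BN
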